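/- arXiv:2102.01928 — 4 statements merged into one kernel-verified Lean document; each statement's English description precedes it below -/
import Mathlib

section
/- Let G be a directed acyclic graph with vertex set V, and let A be its adjacency matrix where A_{uv} counts the number of distinct directed paths from u to v (with A_{uu} interpreted via the empty path convention, i.e., the path-count matrix is (I - M)^{-1} where M is the 0/1 adjacency matrix). After inserting a new edge (x,y), the number of paths from u to v in the new graph equals A_{uv} + A_{ux} · A_{yv}, provided the new graph remains acyclic. -/
/-- `IsPathOn E u v l` : `u :: l` is the vertex sequence of a directed path
from `u` to `v` in the graph `E` (the path is empty iff `l = []`, in which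
case `u = v`). -/
def IsPathOn {V : Type*} (E : V → V → Prop) (u v : V) (l : List V) : Prop :=
  List.Chain E u l ∧ (u :: l).getLast? = some v

/-- Number of directed paths from `u` to `v`, including the empty path when
`u = v` (so this is the entry of `(I - M)⁻¹` for the 0/1 adjacency matrix
`M`). -/
noncomputable def rpathCount {V : Type*} (E : V → V → Prop) (u v : V) : ℕ :=
  Set.ncard {l : List V | IsPathOn E u v l}


/-! A path in `E + (x, y)` that avoids the new edge is a path in `E`. Otherwise cut it at its
first use of `(x, y)`: the part before is an `E`-path `u → x`, and the part after is an
`E`-path `y → v`, because acyclicity forbids returning to `y`. Conversely every such pair glues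
to a new path, and since `¬ E x y` no `E`-path `u → x` extends to a longer one through `y`, so
the cut point is unique and glued paths are never old ones. -/

open Relation

section Paths

variable {V : Type*} {R : V → V → Prop} {u v x y : V} {p q : List V}

theorem List.IsChain.nodup_of_acyclic (hR : ¬ ∃ v, TransGen R v v) {l : List V}
    (h : l.IsChain R) : l.Nodup :=
  List.Pairwise.imp (S := (· ≠ ·)) (fun hab hba => hR ⟨_, hba ▸ hab⟩)
    (h.imp fun _ _ => TransGen.single).pairwise

theorem IsPathOn.mono {S : V → V → Prop} (hRS : R ≤ S) {l : List V} (h : IsPathOn R u v l) :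
    IsPathOn S u v l :=
  ⟨List.IsChain.imp hRS h.1, h.2⟩

theorem setOf_isPathOn_finite [Fintype V] (hR : ¬ ∃ v, TransGen R v v) (u v : V) :
    {l | IsPathOn R u v l}.Finite :=
  (List.finite_length_le V (Fintype.card V)).subset fun _ hl =>
    Nat.le_of_succ_le (List.IsChain.nodup_of_acyclic hR hl.1).length_le_card

theorem IsPathOn.append_cons (hp : IsPathOn R u x p) (hxy : R x y) (hq : IsPathOn R y v q) :
    IsPathOn R u v (p ++ y :: q) := by
  refine ⟨List.isChain_cons_split.2 ⟨?_, hq.1⟩, ?_⟩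
  · rw [← List.cons_append]
    exact hp.1.append (.singleton y) fun a ha b hb => by simp_all [hp.2]
  · exact (List.getLast?_append_cons (u :: p) y q).trans hq.2

theorem not_isChain_append_cons (hxy : ¬ R x y) (hp : IsPathOn R u x p) (r : List V) :
    ¬ (u :: (p ++ y :: r)).IsChain R := fun h => by
  rw [List.isChain_cons_split, ← List.cons_append, List.isChain_append] at h
  exact hxy (h.1.2.2 x hp.2 y rfl)

theorem IsPathOn.eq_of_append_cons_eq (hxy : ¬ R x y) {p' q' : List V} (hp : IsPathOn R u x p)
    (hp' : IsPathOn R u x p') (h : p ++ y :: q = p' ++ y :: q') : p = p' ∧ q = q' := by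
  rcases List.append_eq_append_iff.1 h with ⟨_ | ⟨b, r⟩, rfl, hq⟩ | ⟨_ | ⟨b, r⟩, rfl, hq⟩
  · simpa using hq
  · obtain ⟨rfl, -⟩ := List.cons_eq_cons.1 hq
    exact absurd hp'.1 (not_isChain_append_cons hxy hp r)
  · simpa using hq.symm
  · obtain ⟨rfl, -⟩ := List.cons_eq_cons.1 hq
    exact absurd hp.1 (not_isChain_append_cons hxy hp' r)

end Paths

def addEdge {V : Type*} (E : V → V → Prop) (x y : V) : V → V → Prop :=
  fun a b => E a b ∨ (a = x ∧ b = y)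

section AddEdge

variable {V : Type*} {E : V → V → Prop} {x y : V}

theorem le_addEdge : E ≤ addEdge E x y := fun _ _ => Or.inl

theorem List.IsChain.of_addEdge {a : V} {l : List V} (h : (a :: l).IsChain (addEdge E x y))
    (hy : y ∉ l) : (a :: l).IsChain E :=
  h.imp_of_mem_tail_imp fun _ _ _ hb hab =>
    hab.resolve_right fun hxy => hy (hxy.2 ▸ hb)

theorem exists_eq_append_cons_of_isChain_addEdge :
    ∀ {u : V} {l : List V}, (u :: l).IsChain (addEdge E x y) → ¬ (u :: l).IsChain E →
      ∃ p q, l = p ++ y :: q ∧ IsPathOn E u x p ∧ (y :: q).IsChain (addEdge E x y)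
  | _, [], _, hE => absurd (.singleton _) hE
  | u, b :: l, h, hE => by
    rw [List.isChain_cons_cons] at h
    by_cases hub : E u b
    · obtain ⟨p, q, rfl, hp, hq⟩ := exists_eq_append_cons_of_isChain_addEdge h.2
        fun hbl => hE (hbl.cons_cons hub)
      exact ⟨b :: p, q, rfl, ⟨hp.1.cons_cons hub, by simpa using hp.2⟩, hq⟩
    · obtain ⟨rfl, rfl⟩ := h.1.resolve_left hub
      exact ⟨[], l, rfl, ⟨.singleton _, rfl⟩, h.2⟩

theorem setOf_isPathOn_addEdge (hacyc : ¬ ∃ v, TransGen (addEdge E x y) v v) (u v : V) :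
    {l | IsPathOn (addEdge E x y) u v l} = {l | IsPathOn E u v l} ∪
      (fun pq => pq.1 ++ y :: pq.2) '' ({p | IsPathOn E u x p} ×ˢ {q | IsPathOn E y v q}) := by
  ext l
  constructor
  · intro hl
    by_cases hE : (u :: l).IsChain E
    · exact Or.inl ⟨hE, hl.2⟩
    obtain ⟨p, q, rfl, hp, hq⟩ := exists_eq_append_cons_of_isChain_addEdge hl.1 hE
    have hyq : y ∉ q := (List.nodup_cons.1 (hq.nodup_of_acyclic hacyc)).1
    refine Or.inr ⟨(p, q), ⟨hp, hq.of_addEdge hyq, ?_⟩, rfl⟩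
    exact (List.getLast?_append_cons (u :: p) y q).symm.trans hl.2
  · rintro (hl | ⟨⟨p, q⟩, ⟨hp, hq⟩, rfl⟩)
    · exact hl.mono le_addEdge
    · exact (hp.mono le_addEdge).append_cons (Or.inr ⟨rfl, rfl⟩) (hq.mono le_addEdge)

end AddEdge

/-- In a finite DAG with path-count matrix `A` (empty-path convention),
after inserting a new edge `(x,y)` such that the graph stays acyclic, the
number of paths from `u` to `v` becomes `A u v + A u x * A y v`. -/
theorem stmt_2 {V : Type*} [Fintype V] (E : V → V → Prop) (x y : V)
    (hxy : ¬ E x y)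
    (hacyc : ¬ ∃ v, Relation.TransGen E v v)
    (hacyc' : ¬ ∃ v, Relation.TransGen (fun a b => E a b ∨ (a = x ∧ b = y)) v v)
    (u v : V) :
    rpathCount (fun a b => E a b ∨ (a = x ∧ b = y)) u v =
      rpathCount E u v + rpathCount E u x * rpathCount E y v := by
  change rpathCount (addEdge E x y) u v = _
  have hdisj : Disjoint {l | IsPathOn E u v l}
      ((fun pq => pq.1 ++ y :: pq.2) '' ({p | IsPathOn E u x p} ×ˢ {q | IsPathOn E y v q})) :=
    Set.disjoint_left.2 <| by
      rintro _ hl ⟨⟨_, q⟩, ⟨hp, _⟩, rfl⟩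
      exact not_isChain_append_cons hxy hp q hl.1
  have hinj : Set.InjOn (fun pq : List V × List V => pq.1 ++ y :: pq.2)
      ({p | IsPathOn E u x p} ×ˢ {q | IsPathOn E y v q}) :=
    fun _ ⟨hp, _⟩ _ ⟨hp', _⟩ h => Prod.ext_iff.2 (hp.eq_of_append_cons_eq hxy hp' h)
  rw [rpathCount, setOf_isPathOn_addEdge hacyc' u v,
    Set.ncard_union_eq hdisj (setOf_isPathOn_finite hacyc u v)
      (((setOf_isPathOn_finite hacyc u x).prod (setOf_isPathOn_finite hacyc y v)).image _),
    hinj.ncard_image, Set.ncard_prod]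
  rfl
end

section
/- Let G = (V, E) be a directed graph with reachability relation R⁺, let V' ⊆ V, and let G' be the sub-graph on V' whose edge set is {(u,v) ∈ V'×V' | (u,v) ∈ R⁺}. Suppose H is any graph on V' with the same reachability relation as G' (e.g., a transitive reduction of G'). Then for any set of new edges F ⊆ V' × V', adding F to G creates a directed cycle among vertices of V' if and only if adding F to H creates a directed cycle. -/
/-!
Since every new edge has both endpoints in `V'`, a cycle of `E ∪ F` through a vertex of `V'`
leaves and re-enters `V'` only along `E`-paths between vertices of `V'`, each of which is a
single edge of the induced closure `G'`. Hence such a cycle exists iff `G' ∪ F` has a cycle, and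
since `H` and `G'` have the same reachability relation, iff `H ∪ F` has one.
-/

open Relation

namespace InducedClosure

variable {V : Type*} (E : V → V → Prop) (V' : Set V)

/-- The paper's induced closure sub-graph `G^i_tc` (called `G'` in the statement). -/
def inducedClosure : V → V → Prop := fun x y => x ∈ V' ∧ y ∈ V' ∧ TransGen E x y

variable {E V'}

lemma reflTransGen_inducedClosure_of_reflTransGen {x y : V} (hx : x ∈ V') (hy : y ∈ V')
    (h : ReflTransGen E x y) : ReflTransGen (inducedClosure E V') x y := by
  rcases reflTransGen_iff_eq_or_transGen.mp h with rfl | h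
  · rfl
  · exact .single ⟨hx, hy, h⟩

lemma transGen_or_left_closed {r s f : V → V → Prop} (h : r ≤ TransGen s) :
    TransGen (fun a b => r a b ∨ f a b) ≤ TransGen (fun a b => s a b ∨ f a b) :=
  TransGen.closed fun a b => by
    rintro (hr | hf)
    · exact TransGen.mono (fun _ _ => Or.inl) a b (h a b hr)
    · exact .single (Or.inr hf)

lemma mem_of_transGen {r : V → V → Prop} (hr : ∀ a b, r a b → b ∈ V') {x y : V}
    (h : TransGen r x y) : y ∈ V' := by
  obtain ⟨z, -, hzy⟩ := TransGen.tail'_iff.mp h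
  exact hr z y hzy

variable {F : V → V → Prop} (hF : ∀ a b, F a b → a ∈ V' ∧ b ∈ V')
include hF

/-- Along an `E ∪ F`-path from `V'`, the last visit of `V'` is reachable in `G' ∪ F` and is
followed only by `E`-edges. -/
lemma exists_mem_reflTransGen_of_reflTransGen_or {x y : V} (hx : x ∈ V')
    (h : ReflTransGen (fun a b => E a b ∨ F a b) x y) :
    ∃ z ∈ V', ReflTransGen (fun a b => inducedClosure E V' a b ∨ F a b) x z ∧
      ReflTransGen E z y := by
  induction h with
  | refl => exact ⟨x, hx, .refl, .refl⟩
  | @tail b c _ hbc ih =>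
    obtain ⟨z, hz, hxz, hzb⟩ := ih
    rcases hbc with hE | hF'
    · exact ⟨z, hz, hxz, hzb.tail hE⟩
    · have hzb' := reflTransGen_inducedClosure_of_reflTransGen hz (hF b c hF').1 hzb
      refine ⟨c, (hF b c hF').2, ?_, .refl⟩
      exact (hxz.trans (ReflTransGen.mono (fun _ _ => Or.inl) _ _ hzb')).tail (Or.inr hF')

lemma transGen_inducedClosure_or_of_transGen_or {x y : V} (hx : x ∈ V') (hy : y ∈ V')
    (h : TransGen (fun a b => E a b ∨ F a b) x y) :
    TransGen (fun a b => inducedClosure E V' a b ∨ F a b) x y := by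
  obtain ⟨u, hxu, huy⟩ := TransGen.tail'_iff.mp h
  obtain ⟨z, hz, hxz, hzu⟩ := exists_mem_reflTransGen_of_reflTransGen_or hF hx hxu
  rcases huy with hE | hF'
  · exact TransGen.tail' hxz (Or.inl ⟨hz, hy, TransGen.tail' hzu hE⟩)
  · have hzu' := reflTransGen_inducedClosure_of_reflTransGen hz (hF u y hF').1 hzu
    exact TransGen.tail' (hxz.trans (ReflTransGen.mono (fun _ _ => Or.inl) _ _ hzu')) (Or.inr hF')

end InducedClosure

open InducedClosure in
/-- Let `G = (V,E)` be a directed graph with reachability relation `R⁺`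
(`Relation.TransGen E`), `V' ⊆ V`, and let `G'` be the graph on `V'` whose
edges are `{(u,v) ∈ V'×V' | (u,v) ∈ R⁺}`.  Let `H` be any graph on `V'`
(all endpoints of `H`-edges lie in `V'`) with the same reachability relation
as `G'` (e.g. a transitive reduction of `G'`).  Then for any set of new
edges `F ⊆ V' × V'`, adding `F` to `G` creates a directed cycle among the
vertices of `V'` iff adding `F` to `H` creates a directed cycle. -/
theorem stmt_5 {V : Type*} (E : V → V → Prop) (V' : Set V)
    (H : V → V → Prop) (hH : ∀ a b, H a b → a ∈ V' ∧ b ∈ V')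
    (hHtc : ∀ a b, Relation.TransGen H a b ↔
      Relation.TransGen (fun x y => x ∈ V' ∧ y ∈ V' ∧ Relation.TransGen E x y) a b)
    (F : V → V → Prop) (hF : ∀ a b, F a b → a ∈ V' ∧ b ∈ V') :
    (∃ v ∈ V', Relation.TransGen (fun a b => E a b ∨ F a b) v v) ↔
      (∃ v, Relation.TransGen (fun a b => H a b ∨ F a b) v v) := by
  have hGH : inducedClosure E V' ≤ TransGen H := fun a b h => (hHtc a b).2 (.single h)
  have hHE : H ≤ TransGen E := fun a b h =>
    TransGen.closed (fun _ _ h => h.2.2) a b ((hHtc a b).1 (.single h))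
  constructor
  · rintro ⟨v, hv, hcyc⟩
    exact ⟨v, transGen_or_left_closed hGH v v
      (transGen_inducedClosure_or_of_transGen_or hF hv hv hcyc)⟩
  · rintro ⟨v, hcyc⟩
    have hv : v ∈ V' :=
      mem_of_transGen (fun a b h => h.elim (hH a b · |>.2) (hF a b · |>.2)) hcyc
    exact ⟨v, hv, transGen_or_left_closed hHE v v hcyc⟩
end

section
/- Let G be a finite directed graph partitioned into vertex classes V_1, ..., V_k. If inserting an edge set F with all endpoints in a single class V_i into G creates a directed cycle, and G itself is acyclic, then the created cycle need not be contained in V_i; however, every such cycle induces a cycle in the graph on V_i whose edges are F together with the pairs (u,v) ∈ V_i × V_i with v reachable from u in G. -/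
/-! A cycle of `E ∪ F` cannot consist of `E`-edges only, so it runs through an inserted edge
`a → b` and returns from `b` to `a`. Reading that return path from its end, every maximal
`E`-segment between two vertices of the class is a single closure edge, which turns the
return path into a path of the auxiliary graph. -/

open Relation

namespace Relation

variable {V : Type*} (E F : V → V → Prop) (s : Set V)

def closureOn : V → V → Prop :=
  fun a b => F a b ∨ (a ∈ s ∧ b ∈ s ∧ TransGen E a b)

variable {E F s}

lemma TransGen.exists_edge_of_not_transGen {x y : V}
    (h : TransGen (fun a b => E a b ∨ F a b) x y) (hE : ¬ TransGen E x y) :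
    ∃ a b, F a b ∧ ReflTransGen (fun a b => E a b ∨ F a b) x a ∧
      ReflTransGen (fun a b => E a b ∨ F a b) b y := by
  induction h using TransGen.head_induction_on with
  | single hxy =>
    rcases hxy with hxy | hxy
    · exact absurd (TransGen.single hxy) hE
    · exact ⟨_, _, hxy, .refl, .refl⟩
  | @head x c hxc hcy ih =>
    rcases hxc with hxc | hxc
    · obtain ⟨a, b, hab, hca, hby⟩ := ih fun hcy => hE (TransGen.head hxc hcy)
      exact ⟨a, b, hab, ReflTransGen.head (Or.inl hxc) hca, hby⟩
    · exact ⟨x, c, hxc, .refl, hcy.to_reflTransGen⟩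

lemma ReflTransGen.closureOn_of_mem {x y : V} (h : ReflTransGen E x y) (hx : x ∈ s)
    (hy : y ∈ s) : ReflTransGen (closureOn E F s) x y := by
  rcases reflTransGen_iff_eq_or_transGen.mp h with rfl | h
  · exact .refl
  · exact .single (Or.inr ⟨hx, hy, h⟩)

/-- `z` is the source of the first inserted edge, or `y` if there is none. -/
lemma ReflTransGen.exists_reflTransGen_closureOn (hF : ∀ a b, F a b → a ∈ s ∧ b ∈ s) {x y : V}
    (h : ReflTransGen (fun a b => E a b ∨ F a b) x y) (hy : y ∈ s) :
    ∃ z ∈ s, ReflTransGen E x z ∧ ReflTransGen (closureOn E F s) z y := by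
  induction h using ReflTransGen.head_induction_on with
  | refl => exact ⟨y, hy, .refl, .refl⟩
  | @head x c hxc _ ih =>
    obtain ⟨z, hz, hcz, hzy⟩ := ih
    rcases hxc with hxc | hxc
    · exact ⟨z, hz, .head hxc hcz, hzy⟩
    · obtain ⟨hx, hc⟩ := hF x c hxc
      exact ⟨x, hx, .refl, .head (Or.inl hxc) ((hcz.closureOn_of_mem hc hz).trans hzy)⟩

lemma ReflTransGen.closureOn_of_sup (hF : ∀ a b, F a b → a ∈ s ∧ b ∈ s) {x y : V}
    (h : ReflTransGen (fun a b => E a b ∨ F a b) x y) (hx : x ∈ s) (hy : y ∈ s) :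
    ReflTransGen (closureOn E F s) x y := by
  obtain ⟨z, hz, hxz, hzy⟩ := h.exists_reflTransGen_closureOn hF hy
  exact (hxz.closureOn_of_mem hx hz).trans hzy

end Relation

theorem stmt_13_general {V : Type*} (E : V → V → Prop)
    (hacyc : ¬ ∃ v, Relation.TransGen E v v)
    (k : ℕ) (P : Fin k → Set V)
    (i : Fin k)
    (F : V → V → Prop) (hF : ∀ a b, F a b → a ∈ P i ∧ b ∈ P i)
    (hcyc : ∃ v, Relation.TransGen (fun a b => E a b ∨ F a b) v v) :
    ∃ v, Relation.TransGen
      (fun a b => F a b ∨ (a ∈ P i ∧ b ∈ P i ∧ Relation.TransGen E a b)) v v := by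
  obtain ⟨v, hv⟩ := hcyc
  obtain ⟨a, b, hab, hva, hbv⟩ := hv.exists_edge_of_not_transGen fun h => hacyc ⟨v, h⟩
  obtain ⟨ha, hb⟩ := hF a b hab
  have hba : ReflTransGen (closureOn E F (P i)) b a := (hbv.trans hva).closureOn_of_sup hF hb ha
  exact ⟨a, TransGen.head' (Or.inl hab) hba⟩

/-- Let `G = (V,E)` be a finite acyclic directed graph whose vertex set is
partitioned into classes `P 0, ..., P (k-1)`, and let `F` be a set of new
edges all of whose endpoints lie in a single class `P i`.  If inserting `F`
into `G` creates a directed cycle, then there is a cycle in the auxiliary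
graph on `P i` whose edges are `F` together with the closure edges
`{(u,v) ∈ P i × P i | v reachable from u in G}`. -/
theorem stmt_13 {V : Type*} [Fintype V] (E : V → V → Prop)
    (hacyc : ¬ ∃ v, Relation.TransGen E v v)
    (k : ℕ) (P : Fin k → Set V)
    (hdisj : ∀ i j, i ≠ j → Disjoint (P i) (P j))
    (hcover : (⋃ i, P i) = Set.univ)
    (i : Fin k)
    (F : V → V → Prop) (hF : ∀ a b, F a b → a ∈ P i ∧ b ∈ P i)
    (hcyc : ∃ v, Relation.TransGen (fun a b => E a b ∨ F a b) v v) :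
    ∃ v, Relation.TransGen
      (fun a b => F a b ∨ (a ∈ P i ∧ b ∈ P i ∧ Relation.TransGen E a b)) v v :=
  stmt_13_general E hacyc k P i F hF hcyc
end

section
/- Let G be a finite acyclic directed graph and F a set of edges with all endpoints in a subset V' ⊆ V. The graph G ∪ F is acyclic if and only if the graph on V' with edge set F ∪ {(u,v) ∈ V'×V' | v reachable from u in G via a nonempty path} is acyclic. -/
/-!
A cycle of `E ⊔ F` cannot consist of `E`-edges alone, so it passes through an `F`-edge `u → w`
and closes up through an `(E ⊔ F)`-path from `w ∈ V'` back to `u ∈ V'`. Cutting that path at its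
`F`-edges, whose endpoints lie in `V'`, leaves maximal `E`-segments between vertices of `V'`, each
of which is a single closure edge. Conversely every edge of the reduced graph is a nonempty
`(E ⊔ F)`-path.
-/

open Relation

namespace Relation

variable {α : Type*} {r s : α → α → Prop} {a b : α}

theorem TransGen.sup_elim (h : TransGen (r ⊔ s) a b) :
    TransGen r a b ∨
      ∃ u w, s u w ∧ ReflTransGen (r ⊔ s) a u ∧ ReflTransGen (r ⊔ s) w b := by
  induction h with
  | single h =>
    rcases h with h | h
    · exact .inl (.single h)
    · exact .inr ⟨_, _, h, .refl, .refl⟩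
  | tail _ h ih =>
    rcases ih with hr | ⟨u, w, hs, hau, hwb⟩
    · rcases h with h | h
      · exact .inl (hr.tail h)
      · exact .inr ⟨_, _, h, (TransGen.mono le_sup_left _ _ hr).to_reflTransGen, .refl⟩
    · exact .inr ⟨u, w, hs, hau, hwb.tail h⟩

end Relation

section ReducedGraph

variable {V : Type*} {E F : V → V → Prop} {V' : Set V}

def reducedGraph (E : V → V → Prop) (V' : Set V) (F : V → V → Prop) : V → V → Prop :=
  fun a b => F a b ∨ (a ∈ V' ∧ b ∈ V' ∧ TransGen E a b)

theorem reducedGraph_le_transGen_sup : reducedGraph E V' F ≤ TransGen (E ⊔ F) := by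
  rintro a b (h | ⟨-, -, h⟩)
  · exact .single (Or.inr h)
  · exact TransGen.mono le_sup_left _ _ h

theorem reflTransGen_reducedGraph_of_reflTransGen {a b : V} (ha : a ∈ V') (hb : b ∈ V')
    (h : ReflTransGen E a b) : ReflTransGen (reducedGraph E V' F) a b := by
  rcases reflTransGen_iff_eq_or_transGen.mp h with rfl | h
  · exact .refl
  · exact .single (Or.inr ⟨ha, hb, h⟩)

theorem exists_reducedGraph_of_reflTransGen_sup (hF : ∀ a b, F a b → a ∈ V' ∧ b ∈ V')
    {a b : V} (ha : a ∈ V') (h : ReflTransGen (E ⊔ F) a b) :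
    ∃ z ∈ V', ReflTransGen (reducedGraph E V' F) a z ∧ ReflTransGen E z b := by
  induction h with
  | refl => exact ⟨a, ha, .refl, .refl⟩
  | @tail b c _ h ih =>
    obtain ⟨z, hz, haz, hzb⟩ := ih
    rcases h with h | h
    · exact ⟨z, hz, haz, hzb.tail h⟩
    · have hzb' := reflTransGen_reducedGraph_of_reflTransGen (F := F) hz (hF _ _ h).1 hzb
      exact ⟨c, (hF _ _ h).2, (haz.trans hzb').tail (Or.inl h), .refl⟩

theorem reflTransGen_reducedGraph_of_reflTransGen_sup (hF : ∀ a b, F a b → a ∈ V' ∧ b ∈ V')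
    {a b : V} (ha : a ∈ V') (hb : b ∈ V') (h : ReflTransGen (E ⊔ F) a b) :
    ReflTransGen (reducedGraph E V' F) a b := by
  obtain ⟨z, hz, haz, hzb⟩ := exists_reducedGraph_of_reflTransGen_sup hF ha h
  exact haz.trans (reflTransGen_reducedGraph_of_reflTransGen hz hb hzb)

end ReducedGraph

theorem stmt_14_general {V : Type*} (E : V → V → Prop)
    (hacyc : ¬ ∃ v, Relation.TransGen E v v)
    (V' : Set V) (F : V → V → Prop) (hF : ∀ a b, F a b → a ∈ V' ∧ b ∈ V') :
    (¬ ∃ v, Relation.TransGen (fun a b => E a b ∨ F a b) v v) ↔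
      (¬ ∃ v, Relation.TransGen
        (fun a b => F a b ∨ (a ∈ V' ∧ b ∈ V' ∧ Relation.TransGen E a b)) v v) := by
  change (¬ ∃ v, TransGen (E ⊔ F) v v) ↔ ¬ ∃ v, TransGen (reducedGraph E V' F) v v
  refine not_congr ⟨fun ⟨v, hv⟩ => ?_, fun ⟨v, hv⟩ => ⟨v, ?_⟩⟩
  · rcases hv.sup_elim with hE | ⟨u, w, huw, hvu, hwv⟩
    · exact absurd ⟨v, hE⟩ hacyc
    · have hwu := reflTransGen_reducedGraph_of_reflTransGen_sup hF (hF u w huw).2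
        (hF u w huw).1 (hwv.trans hvu)
      exact ⟨w, .tail' hwu (Or.inl huw)⟩
  · exact TransGen.closed reducedGraph_le_transGen_sup v v hv

/-- Let `G = (V,E)` be a finite acyclic directed graph, `V' ⊆ V`, and `F` a
set of new edges with all endpoints in `V'`.  Then `G ∪ F` is acyclic iff
the graph on `V'` with edge set `F` together with the closure edges
`{(u,v) ∈ V'×V' | v reachable from u in G via a nonempty path}` is
acyclic. -/
theorem stmt_14 {V : Type*} [Fintype V] (E : V → V → Prop)
    (hacyc : ¬ ∃ v, Relation.TransGen E v v)
    (V' : Set V) (F : V → V → Prop) (hF : ∀ a b, F a b → a ∈ V' ∧ b ∈ V') :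
    (¬ ∃ v, Relation.TransGen (fun a b => E a b ∨ F a b) v v) ↔
      (¬ ∃ v, Relation.TransGen
        (fun a b => F a b ∨ (a ∈ V' ∧ b ∈ V' ∧ Relation.TransGen E a b)) v v) :=
  stmt_14_general E hacyc V' F hF
end
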